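/- arXiv:2102.09279 — 2 statements merged into one kernel-verified Lean document; each statement's English description precedes it below -/
import Mathlib

section
/- Let u, s ∈ S^{m−1} ⊂ ℝ^m with ⟨u,s⟩ = 0, τ = u + is, τ† = −u + is. For (k,ℓ) ≠ (k',ℓ') in ℕ², ∫_{S^{m−1}} ∫_0^π conj(f_{τ,k,ℓ}(e^{iθ}ω)) · f_{τ,k',ℓ'}(e^{iθ}ω) dθ dS(ω) = 0, where f_{τ,k,ℓ}(z) = ⟨z,τ⟩^k⟨z,τ†⟩^ℓ. -/
/-!
Write `P ω = ⟪u, ω⟫ + i⟪s, ω⟫` for the complex coordinate of `ω` in the plane spanned by `u, s`.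
Then `⟨e^{iθ}ω, τ⟩ = e^{iθ} P ω` and `⟨e^{iθ}ω, τ†⟩ = -e^{iθ} conj (P ω)`, so the integrand
splits as `± e^{i(k'+l'-k-l)θ} · P^(l+k') conj(P)^(k+l')`, a function of `θ` times one of `ω`.
If `l + k' ≠ k + l'`, the rotation by `π / (l + k' - k - l')` in the `(u, s)`-plane preserves the
surface measure and multiplies `P` by a unit whose `(l + k' - k - l')`-th power is `-1`, so the
sphere integral vanishes. Otherwise `k' + l' - k - l = 2(l' - l)` is even and nonzero, and the
`θ`-integral of `e^{2i(l' - l)θ}` over a full period `[0, π]` vanishes.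
-/

noncomputable section

open MeasureTheory Metric

/-- The bilinear pairing `⟨u,v⟩ = ∑_j u_j v_j` on `ℂ^m`. -/
def pairC {m : ℕ} (u v : Fin m → ℂ) : ℂ := ∑ j, u j * v j

/-- `ℝ^m` with its Euclidean structure. -/
abbrev V (m : ℕ) := EuclideanSpace ℝ (Fin m)

/-- The real bilinear pairing `⟨x,y⟩ = ∑_j x_j y_j` on `ℝ^m`. -/
def pairR {m : ℕ} (x y : V m) : ℝ := ∑ j, x j * y j

/-- `τ = u + i s ∈ ℂ^m`, for real vectors `u, s`. -/
def tauP {m : ℕ} (u s : V m) : Fin m → ℂ := fun j => (u j : ℂ) + (s j : ℂ) * Complex.I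

/-- `τ† = -u + i s ∈ ℂ^m`, for real vectors `u, s`. -/
def tauM {m : ℕ} (u s : V m) : Fin m → ℂ := fun j => -(u j : ℂ) + (s j : ℂ) * Complex.I

/-- `e^{iθ} ω ∈ ℂ^m`, a point of the Lie sphere (for `ω ∈ S^{m-1}`). -/
def lvec {m : ℕ} (θ : ℝ) (ω : V m) : Fin m → ℂ :=
  fun j => Complex.exp (θ * Complex.I) * (ω j : ℂ)

/-- The surface measure `dS` on the unit sphere `S^{m-1} ⊂ ℝ^m`
(the total mass of this measure is the surface area `A_m`). -/
abbrev sphMeasure (m : ℕ) : Measure (sphere (0 : V m) 1) := (volume : Measure (V m)).toSphere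

open scoped RealInnerProductSpace ComplexConjugate Pointwise Real
open Complex

theorem integral_eq_zero_of_comp_eq_mul {α : Type*} [MeasurableSpace α] {μ : Measure α}
    (e : α ≃ᵐ α) (he : MeasurePreserving e μ μ) {G : α → ℂ} {c : ℂ} (hc : c ≠ 1)
    (hG : ∀ x, G (e x) = c * G x) : ∫ x, G x ∂μ = 0 := by
  have h := he.integral_comp' G
  simp only [hG, integral_const_mul] at h
  by_contra h0
  exact hc ((mul_eq_right₀ h0).mp h)

section Sphere

variable {E : Type*} [NormedAddCommGroup E] [NormedSpace ℝ E]

def LinearIsometryEquiv.restrictUnitSphere (f : E ≃ₗᵢ[ℝ] E) :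
    sphere (0 : E) 1 ≃ₜ sphere (0 : E) 1 :=
  f.toHomeomorph.sets (by simp [f.preimage_sphere])

theorem LinearIsometryEquiv.measurePreserving_restrictUnitSphere [MeasurableSpace E]
    [BorelSpace E] {μ : Measure E} (f : E ≃ₗᵢ[ℝ] E) (hf : MeasurePreserving f μ μ) :
    MeasurePreserving f.restrictUnitSphere μ.toSphere μ.toSphere := by
  have hmeas := f.restrictUnitSphere.continuous.measurable
  refine ⟨hmeas, Measure.ext fun t ht => ?_⟩
  have hval : ((↑) '' (f.restrictUnitSphere ⁻¹' t) : Set E) = f ⁻¹' ((↑) '' t) := by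
    ext x
    simp only [Set.mem_image, Set.mem_preimage, Subtype.exists, exists_and_right, exists_eq_right]
    exact ⟨fun ⟨h, hx⟩ => ⟨by simpa using h, hx⟩, fun ⟨h, hx⟩ => ⟨by simpa using h, hx⟩⟩
  have hsmul : Set.Ioo (0 : ℝ) 1 • f ⁻¹' ((↑) '' t) = f ⁻¹' (Set.Ioo (0 : ℝ) 1 • (↑) '' t) := by
    ext x
    simp only [Set.mem_smul, Set.mem_preimage]
    constructor
    · rintro ⟨r, hr, y, hy, rfl⟩
      exact ⟨r, hr, f y, hy, (f.map_smul r y).symm⟩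
    · rintro ⟨r, hr, z, hz, hx⟩
      exact ⟨r, hr, f.symm z, by simpa using hz,
        by rw [← f.symm_apply_apply x, ← hx, f.symm.map_smul]⟩
  rw [Measure.map_apply hmeas ht, Measure.toSphere_apply' _ (hmeas ht),
    Measure.toSphere_apply' _ ht, hval, hsmul,
    hf.measure_preimage_emb f.toHomeomorph.measurableEmbedding]

end Sphere

section PlaneRotation

variable {E : Type*} [NormedAddCommGroup E] [InnerProductSpace ℝ E] (u s : E)

def planeCoord (x : E) : ℂ := ⟪u, x⟫ + ⟪s, x⟫ * I

theorem planeCoord_add (x y : E) :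
    planeCoord u s (x + y) = planeCoord u s x + planeCoord u s y := by
  simp only [planeCoord, inner_add_right]; push_cast; ring

theorem planeCoord_smul (c : ℝ) (x : E) : planeCoord u s (c • x) = c * planeCoord u s x := by
  simp only [planeCoord, real_inner_smul_right]; push_cast; ring

/-- For orthonormal `u, s` and `‖z‖ = 1`: the rotation by `arg z` of the plane spanned by `u, s`,
identity on its orthogonal complement. -/
def planeRotation (z : ℂ) : E →ₗ[ℝ] E where
  toFun x := x + ((z - 1) * planeCoord u s x).re • u + ((z - 1) * planeCoord u s x).im • s
  map_add' x y := by
    simp only [planeCoord_add, mul_add, add_re, add_im, add_smul]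
    abel
  map_smul' c x := by
    simp only [planeCoord_smul, RingHom.id_apply, smul_add, smul_smul, mul_left_comm _ (c : ℂ),
      re_ofReal_mul, im_ofReal_mul]

variable {u s}

theorem planeCoord_planeRotation (hu : ‖u‖ = 1) (hs : ‖s‖ = 1) (hus : ⟪u, s⟫ = 0) (z : ℂ)
    (x : E) :
    planeCoord u s (planeRotation u s z x) = z * planeCoord u s x := by
  have hPu : planeCoord u s u = 1 := by
    simp [planeCoord, hu, real_inner_comm, hus]
  have hPs : planeCoord u s s = I := by
    simp [planeCoord, hs, hus]
  simp only [planeRotation, LinearMap.coe_mk, AddHom.coe_mk, planeCoord_add, planeCoord_smul, hPu,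
    hPs]
  rw [mul_one, add_assoc, re_add_im]
  ring

theorem inner_planeRotation (hu : ‖u‖ = 1) (hs : ‖s‖ = 1) (hus : ⟪u, s⟫ = 0) {z : ℂ}
    (hz : ‖z‖ = 1) (x y : E) :
    ⟪planeRotation u s z x, planeRotation u s z y⟫ = ⟪x, y⟫ := by
  have huu : ⟪u, u⟫ = 1 := by rw [real_inner_self_eq_norm_sq, hu, one_pow]
  have hss : ⟪s, s⟫ = 1 := by rw [real_inner_self_eq_norm_sq, hs, one_pow]
  have hsu : ⟪s, u⟫ = 0 := by rw [real_inner_comm, hus]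
  have hz' : z.re ^ 2 + z.im ^ 2 = 1 := by
    rw [← sq_norm_sub_sq_re, hz]; ring
  simp only [planeRotation, LinearMap.coe_mk, AddHom.coe_mk, inner_add_left, inner_add_right,
    real_inner_smul_left, real_inner_smul_right, huu, hss, hus, hsu, planeCoord,
    real_inner_comm u x, real_inner_comm s x, mul_re, mul_im, sub_re, sub_im, one_re, one_im,
    add_re, add_im, ofReal_re, ofReal_im, I_re, I_im]
  ring_nf
  linear_combination (⟪u, x⟫ * ⟪u, y⟫ + ⟪s, x⟫ * ⟪s, y⟫) * hz'

def planeRotationEquiv [FiniteDimensional ℝ E] (hu : ‖u‖ = 1) (hs : ‖s‖ = 1) (hus : ⟪u, s⟫ = 0)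
    {z : ℂ} (hz : ‖z‖ = 1) : E ≃ₗᵢ[ℝ] E :=
  ((planeRotation u s z).isometryOfInner (inner_planeRotation hu hs hus hz)).toLinearIsometryEquiv
    rfl

theorem integral_toSphere_planeCoord_pow_mul_conj_pow [FiniteDimensional ℝ E] [MeasurableSpace E]
    [BorelSpace E] (hu : ‖u‖ = 1) (hs : ‖s‖ = 1) (hus : ⟪u, s⟫ = 0) {a b : ℕ} (hab : a ≠ b) :
    ∫ ω : sphere (0 : E) 1, planeCoord u s ω ^ a * conj (planeCoord u s ω) ^ b
      ∂(volume : Measure E).toSphere = 0 := by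
  have hab' : (a : ℂ) - b ≠ 0 := sub_ne_zero.mpr (Nat.cast_injective.ne hab)
  set z := exp ((π / (a - b) : ℝ) * I)
  have hz : z ^ a * conj z ^ b = -1 := by
    rw [← exp_conj, map_mul, conj_ofReal, conj_I, ← exp_nat_mul, ← exp_nat_mul, ← exp_add,
      ← exp_pi_mul_I]
    congr 1
    push_cast
    field_simp
    ring
  set f := planeRotationEquiv hu hs hus (norm_exp_ofReal_mul_I _)
  refine integral_eq_zero_of_comp_eq_mul f.restrictUnitSphere.toMeasurableEquiv
    (f.measurePreserving_restrictUnitSphere f.measurePreserving) (by norm_num : (-1 : ℂ) ≠ 1)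
    fun ω => ?_
  change planeCoord u s (planeRotation u s z ω) ^ a *
    conj (planeCoord u s (planeRotation u s z ω)) ^ b = _
  rw [planeCoord_planeRotation hu hs hus, map_mul, mul_pow, mul_pow, ← hz]
  ring

end PlaneRotation

theorem integral_exp_int_mul_mul_I_of_even {n : ℤ} (hn : n ≠ 0) (heven : Even n) :
    ∫ θ in (0 : ℝ)..π, exp (n * θ * I) = 0 := by
  obtain ⟨t, rfl⟩ := heven
  have hc : ((t + t : ℤ) : ℂ) * I ≠ 0 := by simpa using hn
  simp_rw [mul_right_comm _ _ I]
  rw [integral_exp_mul_complex hc]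
  have : ((t + t : ℤ) : ℂ) * I * π = t * (2 * π * I) := by push_cast; ring
  rw [this, exp_int_mul_two_pi_mul_I]
  simp

theorem pairR_eq_inner {m : ℕ} (x y : V m) : pairR x y = ⟪x, y⟫ := by
  simp [pairR, PiLp.inner_apply, mul_comm]

theorem pairC_lvec_tauP {m : ℕ} (θ : ℝ) (ω u s : V m) :
    pairC (lvec θ ω) (tauP u s) = exp (θ * I) * planeCoord u s ω := by
  simp only [pairC, lvec, tauP, planeCoord, PiLp.inner_apply, RCLike.inner_apply, conj_trivial]
  push_cast
  rw [Finset.sum_mul, ← Finset.sum_add_distrib, Finset.mul_sum]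
  exact Finset.sum_congr rfl fun j _ => by ring

theorem pairC_lvec_tauM {m : ℕ} (θ : ℝ) (ω u s : V m) :
    pairC (lvec θ ω) (tauM u s) = -(exp (θ * I) * conj (planeCoord u s ω)) := by
  simp only [pairC, lvec, tauM, planeCoord, PiLp.inner_apply, RCLike.inner_apply, conj_trivial]
  push_cast
  simp only [map_add, map_mul, map_sum, conj_ofReal, conj_I, Finset.sum_mul,
    ← Finset.sum_add_distrib, Finset.mul_sum, ← Finset.sum_neg_distrib]
  exact Finset.sum_congr rfl fun j _ => by ring

theorem conj_pairC_lvec_mul_pairC_lvec {m : ℕ} (θ : ℝ) (ω u s : V m) (k l k' l' : ℕ) :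
    conj (pairC (lvec θ ω) (tauP u s) ^ k * pairC (lvec θ ω) (tauM u s) ^ l) *
        (pairC (lvec θ ω) (tauP u s) ^ k' * pairC (lvec θ ω) (tauM u s) ^ l') =
      exp ((((k' + l' : ℕ) : ℤ) - (k + l : ℕ) : ℤ) * θ * I) *
        ((-1) ^ (l + l') * (planeCoord u s ω ^ (l + k') * conj (planeCoord u s ω) ^ (k + l'))) := by
  have hexp : conj (exp (θ * I)) ^ (k + l) * exp (θ * I) ^ (k' + l') =
      exp ((((k' + l' : ℕ) : ℤ) - (k + l : ℕ) : ℤ) * θ * I) := by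
    rw [← exp_conj, map_mul, conj_ofReal, conj_I, ← exp_nat_mul, ← exp_nat_mul, ← exp_add]
    congr 1
    push_cast
    ring
  rw [pairC_lvec_tauP, pairC_lvec_tauM, ← hexp]
  simp only [map_mul, map_pow, map_neg, conj_conj]
  ring

theorem stmt3_general (m : ℕ)
    (u s : sphere (0 : V m) 1) (hus : pairR (u : V m) (s : V m) = 0)
    (k l k' l' : ℕ) (hne : (k, l) ≠ (k', l')) :
    (∫ ω : sphere (0 : V m) 1,
      (∫ θ in (0:ℝ)..Real.pi,
        (starRingEnd ℂ)
            (pairC (lvec θ ω) (tauP (u : V m) (s : V m)) ^ k * pairC (lvec θ ω) (tauM (u : V m) (s : V m)) ^ l) *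
          (pairC (lvec θ ω) (tauP (u : V m) (s : V m)) ^ k' * pairC (lvec θ ω) (tauM (u : V m) (s : V m)) ^ l'))
      ∂(sphMeasure m)) = 0 := by
  have hu : ‖(u : V m)‖ = 1 := norm_eq_of_mem_sphere u
  have hs : ‖(s : V m)‖ = 1 := norm_eq_of_mem_sphere s
  rw [pairR_eq_inner] at hus
  simp_rw [conj_pairC_lvec_mul_pairC_lvec, intervalIntegral.integral_mul_const, integral_const_mul]
  rcases eq_or_ne (l + k') (k + l') with hd | hd
  · have hkl : k = k' → l ≠ l' := by simpa [Prod.ext_iff] using hne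
    rw [integral_exp_int_mul_mul_I_of_even (by omega) ⟨(l' : ℤ) - l, by omega⟩, zero_mul]
  · rw [integral_toSphere_planeCoord_pow_mul_conj_pow hu hs hus hd, mul_zero, mul_zero]

/-- Proposition 3.1, orthogonality of the functions `f_{τ,k,ℓ}`. -/
theorem stmt3 (m : ℕ) (hm : 3 ≤ m)
    (u s : sphere (0 : V m) 1) (hus : pairR (u : V m) (s : V m) = 0)
    (k l k' l' : ℕ) (hne : (k, l) ≠ (k', l')) :
    (∫ ω : sphere (0 : V m) 1,
      (∫ θ in (0:ℝ)..Real.pi,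
        (starRingEnd ℂ)
            (pairC (lvec θ ω) (tauP (u : V m) (s : V m)) ^ k * pairC (lvec θ ω) (tauM (u : V m) (s : V m)) ^ l) *
          (pairC (lvec θ ω) (tauP (u : V m) (s : V m)) ^ k' * pairC (lvec θ ω) (tauM (u : V m) (s : V m)) ^ l'))
      ∂(sphMeasure m)) = 0 :=
  stmt3_general m u s hus k l k' l' hne
end
end

section
/- For every k ∈ ℕ and all x, y ∈ ℝ^m: K_{m,k+1}(x,y) = C_{m,k+1}(x,y) − x · C_{m,k}(x,y) · y, where x·(·)·y denotes Clifford multiplication on the left by the 1-vector x and on the right by the 1-vector y, and the scalar K_{m,k+1}(x,y) is viewed in ℂ_m. -/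
set_option maxHeartbeats 1000000

noncomputable section

open MeasureTheory Metric

/-- The quadratic form on `ℂ^m` defining the complex Clifford algebra `ℂ_m`:
`Q(v) = -∑_j v_j^2`, so that a 1-vector `v` satisfies `v * v = -∑_j v_j^2`,
i.e. the generators `e_j = ι (Pi.single j 1)` satisfy `e_j^2 = -1` and
`e_j e_k + e_k e_j = 0` for `j ≠ k`. -/
abbrev Qm (m : ℕ) : QuadraticForm ℂ (Fin m → ℂ) :=
  QuadraticMap.weightedSumSquares ℂ (fun _ : Fin m => (-1 : ℂ))

/-- The complex Clifford algebra `ℂ_m`. -/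
abbrev Cl (m : ℕ) := CliffordAlgebra (Qm m)

/-- A complex vector, viewed as a 1-vector in the Clifford algebra `ℂ_m`. -/
def cvec {m : ℕ} (u : Fin m → ℂ) : Cl m := CliffordAlgebra.ι (Qm m) u

/-- The complexification of a real vector. -/
def toC {m : ℕ} (x : V m) : Fin m → ℂ := fun j => (x j : ℂ)

/-- A real vector, viewed as a 1-vector in `ℂ_m`. -/
def rvec {m : ℕ} (x : V m) : Cl m := cvec (toC x)

/-- The homogenized Gegenbauer polynomial:
`gegen λ k ⟨x,y⟩ (⟨x,x⟩⟨y,y⟩) = (|x||y|)^k C_k^λ(⟨x,y⟩/(|x||y|))`, where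
`C_k^λ(w) = ∑_{j=0}^{⌊k/2⌋} (-1)^j (Γ(k-j+λ)/(Γ(λ) j! (k-2j)!)) (2w)^{k-2j}`,
with the convention that it vanishes for `k < 0`. -/
def gegen (lam : ℂ) (k : ℤ) (s t : ℂ) : ℂ :=
  if k < 0 then 0
  else ∑ j ∈ Finset.range (k.toNat / 2 + 1),
    (-1) ^ j * (Complex.Gamma ((k : ℂ) - j + lam) /
      (Complex.Gamma lam * (Nat.factorial j : ℂ) * (Nat.factorial (k.toNat - 2 * j) : ℂ))) *
      (2 * s) ^ (k.toNat - 2 * j) * t ^ j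

/-- The zonal spherical harmonic
`K_{m,k}(x,y) = ((2k+m-2)/(m-2)) |x|^k |y|^k C_k^{m/2-1}(⟨x,y⟩/(|x||y|))`,
as a polynomial in two (complex) vectors. -/
def zonalK (m : ℕ) (k : ℤ) (x y : Fin m → ℂ) : ℂ :=
  ((2 * (k : ℂ) + m - 2) / ((m : ℂ) - 2)) *
    gegen ((m : ℂ) / 2 - 1) k (pairC x y) (pairC x x * pairC y y)

/-- The zonal spherical monogenic
`C_{m,k}(x,y) = (|x||y|)^k (C_k^{m/2}(w) + (xy/(|x||y|)) C_{k-1}^{m/2}(w))`,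
`w = ⟨x,y⟩/(|x||y|)`, as a `ℂ_m`-valued polynomial in two (complex) vectors. -/
def zonalC (m : ℕ) (k : ℤ) (x y : Fin m → ℂ) : Cl m :=
  algebraMap ℂ (Cl m) (gegen ((m : ℂ) / 2) k (pairC x y) (pairC x x * pairC y y)) +
    cvec x * cvec y *
      algebraMap ℂ (Cl m) (gegen ((m : ℂ) / 2) (k - 1) (pairC x y) (pairC x x * pairC y y))

/-! ### Auxiliary lemmas -/

lemma fact_ne' (n : ℕ) : ((Nat.factorial n : ℕ) : ℂ) ≠ 0 :=
  Nat.cast_ne_zero.mpr n.factorial_ne_zero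

lemma arg_ne' (m k j : ℕ) (hm : 3 ≤ m) (hj : j ≤ k + 1) :
    (k:ℂ) + 1 - j + ((m:ℂ)/2 - 1) ≠ 0 := by
  have h : (k:ℂ) + 1 - j + ((m:ℂ)/2 - 1) = (((k:ℝ) + 1 - j + ((m:ℝ)/2 - 1) : ℝ) : ℂ) := by
    push_cast; ring
  rw [h, Ne, Complex.ofReal_eq_zero]
  have hj' : (j:ℝ) ≤ (k:ℝ) + 1 := by exact_mod_cast hj
  have hm' : (3:ℝ) ≤ (m:ℝ) := by exact_mod_cast hm
  intro h0; linarith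

lemma lam_ne' (m : ℕ) (hm : 3 ≤ m) : ((m:ℂ)/2 - 1) ≠ 0 := by
  have h : (m:ℂ)/2 - 1 = (((m:ℝ)/2 - 1 : ℝ) : ℂ) := by push_cast; ring
  rw [h, Ne, Complex.ofReal_eq_zero]
  have hm' : (3:ℝ) ≤ (m:ℝ) := by exact_mod_cast hm
  intro h0; linarith

lemma m2_ne' (m : ℕ) (hm : 3 ≤ m) : ((m:ℂ) - 2) ≠ 0 := by
  have h : (m:ℂ) - 2 = (((m:ℝ) - 2 : ℝ) : ℂ) := by push_cast; ring
  rw [h, Ne, Complex.ofReal_eq_zero]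
  have hm' : (3:ℝ) ≤ (m:ℝ) := by exact_mod_cast hm
  intro h0; linarith

lemma gammalam_ne' (m : ℕ) (hm : 3 ≤ m) : Complex.Gamma ((m:ℂ)/2 - 1) ≠ 0 := by
  apply Complex.Gamma_ne_zero_of_re_pos
  have h : (m:ℂ)/2 - 1 = (((m:ℝ)/2 - 1 : ℝ) : ℂ) := by push_cast; ring
  rw [h, Complex.ofReal_re]
  have hm' : (3:ℝ) ≤ (m:ℝ) := by exact_mod_cast hm
  linarith

lemma gammamu_ne' (m : ℕ) (hm : 3 ≤ m) : Complex.Gamma ((m:ℂ)/2) ≠ 0 := by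
  apply Complex.Gamma_ne_zero_of_re_pos
  have h : (m:ℂ)/2 = (((m:ℝ)/2 : ℝ) : ℂ) := by push_cast; ring
  rw [h, Complex.ofReal_re]
  have hm' : (3:ℝ) ≤ (m:ℝ) := by exact_mod_cast hm
  linarith

/-- Step A: the product `t * gegen (m/2) (k-1)` as a shifted sum. -/
lemma stepA' (m : ℕ) (hm : 3 ≤ m) (k : ℕ) (s t : ℂ) :
    t * gegen ((m:ℂ)/2) ((k:ℤ)-1) s t =
      - ∑ j ∈ Finset.range ((k+1)/2 + 1),
        (-1) ^ j * ((j:ℂ) * Complex.Gamma ((k:ℂ) - j + (m:ℂ)/2) /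
          (Complex.Gamma ((m:ℂ)/2) * (Nat.factorial j : ℂ) *
            (Nat.factorial (k + 1 - 2 * j) : ℂ))) *
          (2 * s) ^ (k + 1 - 2 * j) * t ^ j := by
  cases k with
  | zero =>
    rw [gegen, if_pos (by norm_num)]
    simp
  | succ k' =>
    rw [gegen, if_neg (by omega)]
    have h1 : (((k' + 1 : ℕ) : ℤ) - 1).toNat = k' := by omega
    rw [h1]
    have h2 : (k' + 1 + 1)/2 + 1 = (k'/2 + 1) + 1 := by omega
    rw [h2]
    conv_rhs => rw [Finset.sum_range_succ']
    simp only [Nat.cast_zero, zero_mul, zero_div, mul_zero, zero_mul, add_zero]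
    rw [Finset.mul_sum, ← Finset.sum_neg_distrib]
    refine Finset.sum_congr rfl fun i hi => ?_
    have he : k' + 1 + 1 - 2*(i+1) = k' - 2*i := by omega
    rw [he, Nat.factorial_succ]
    have hg : ((((k' + 1 : ℕ) : ℤ) - 1 : ℤ) : ℂ) - (i:ℂ) + (m:ℂ)/2
        = ((k' + 1 : ℕ) : ℂ) - ((i + 1 : ℕ) : ℂ) + (m:ℂ)/2 := by push_cast; ring
    rw [hg]
    have hi1 : ((i:ℂ) + 1) ≠ 0 := by
      have : ((i:ℂ) + 1) = ((i + 1 : ℕ) : ℂ) := by push_cast; ring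
      rw [this]; exact Nat.cast_ne_zero.mpr (by omega)
    push_cast
    field_simp [gammamu_ne' m hm, fact_ne', hi1]
    ring

/-- Step B: the key scalar Gegenbauer identity. -/
lemma scalar_key' (m : ℕ) (hm : 3 ≤ m) (k : ℕ) (s t : ℂ) :
    ((2 * ((((k:ℤ)+1 : ℤ)) : ℂ) + m - 2) / ((m:ℂ) - 2)) * gegen ((m:ℂ)/2 - 1) ((k:ℤ)+1) s t
      = gegen ((m:ℂ)/2) ((k:ℤ)+1) s t - t * gegen ((m:ℂ)/2) ((k:ℤ)-1) s t := by
  rw [stepA' m hm k s t, sub_neg_eq_add]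
  rw [gegen, gegen, if_neg (by omega), if_neg (by omega)]
  have ht : ((k:ℤ)+1).toNat = k + 1 := by omega
  rw [ht, Finset.mul_sum, ← Finset.sum_add_distrib]
  refine Finset.sum_congr rfl fun j hj => ?_
  have hjle : j ≤ k + 1 := by
    have := Finset.mem_range.mp hj; omega
  have hz := arg_ne' m k j hm hjle
  have hΓ1 : Complex.Gamma ((((k:ℤ)+1 : ℤ) : ℂ) - j + (m:ℂ)/2)
      = ((k:ℂ) + 1 - j + ((m:ℂ)/2 - 1)) * Complex.Gamma ((k:ℂ) + 1 - j + ((m:ℂ)/2 - 1)) := by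
    rw [show ((((k:ℤ)+1 : ℤ)) : ℂ) - j + (m:ℂ)/2 = ((k:ℂ) + 1 - j + ((m:ℂ)/2 - 1)) + 1 by
      push_cast; ring]
    exact Complex.Gamma_add_one _ hz
  have hΓ2 : Complex.Gamma ((k:ℂ) - j + (m:ℂ)/2)
      = Complex.Gamma ((k:ℂ) + 1 - j + ((m:ℂ)/2 - 1)) := by
    congr 1; ring
  have hΓ3 : Complex.Gamma ((m:ℂ)/2)
      = ((m:ℂ)/2 - 1) * Complex.Gamma ((m:ℂ)/2 - 1) := by
    have h := Complex.Gamma_add_one _ (lam_ne' m hm)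
    rwa [show ((m:ℂ)/2 - 1) + 1 = (m:ℂ)/2 by ring] at h
  have hΓ4 : Complex.Gamma ((((k:ℤ)+1 : ℤ) : ℂ) - j + ((m:ℂ)/2 - 1))
      = Complex.Gamma ((k:ℂ) + 1 - j + ((m:ℂ)/2 - 1)) := by
    congr 1; push_cast; ring
  rw [hΓ1, hΓ2, hΓ3, hΓ4]
  push_cast
  field_simp [gammalam_ne' m hm, lam_ne' m hm, m2_ne' m hm, fact_ne']
  ring

lemma sq_cvec' {m : ℕ} (u : Fin m → ℂ) :
    cvec u * cvec u = algebraMap ℂ (Cl m) (-pairC u u) := by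
  rw [cvec, CliffordAlgebra.ι_sq_scalar]
  congr 1
  simp [QuadraticMap.weightedSumSquares_apply, pairC, Finset.sum_neg_distrib]

/-- The Clifford-algebra computation `x (a + xy b) y = b x y + (x²)(y²) a`. -/
lemma cliff' (m : ℕ) (u v : Fin m → ℂ) (a b c : ℂ) :
    (algebraMap ℂ (Cl m) a + cvec u * cvec v * algebraMap ℂ (Cl m) b)
      - cvec u * (algebraMap ℂ (Cl m) b + cvec u * cvec v * algebraMap ℂ (Cl m) c) * cvec v
    = algebraMap ℂ (Cl m) (a - pairC u u * pairC v v * c) := by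
  have hu := sq_cvec' u
  have hv := sq_cvec' v
  rw [Algebra.algebraMap_eq_smul_one] at hu hv
  simp only [Algebra.algebraMap_eq_smul_one, mul_add, add_mul, mul_assoc, mul_smul_comm,
    smul_mul_assoc, mul_one, one_mul, hu, hv, smul_smul]
  module

/-- Remark 3.7: `K_{m,k+1}(x,y) = C_{m,k+1}(x,y) - x C_{m,k}(x,y) y`. -/
theorem stmt9 (m : ℕ) (hm : 3 ≤ m) (k : ℕ) (x y : V m) :
    algebraMap ℂ (Cl m) (zonalK m ((k : ℤ) + 1) (toC x) (toC y)) =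
      zonalC m ((k : ℤ) + 1) (toC x) (toC y) -
        rvec x * zonalC m k (toC x) (toC y) * rvec y := by
  rw [zonalK, zonalC, zonalC, rvec, rvec]
  rw [show (k:ℤ) + 1 - 1 = (k:ℤ) by ring]
  rw [cliff' m (toC x) (toC y)]
  congr 1
  exact scalar_key' m hm k (pairC (toC x) (toC y))
    (pairC (toC x) (toC x) * pairC (toC y) (toC y))
end
end
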